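/- Let n ≥ 1, k ≥ 1 and let a2 > a1 ≥ 1 be integers. Then there exists a constant c > 0 such that for all sufficiently large positive integers m, the cokernel of the linear map D^k : V_{m·a1−k, m·a2+k−(n+1)} → V_{m·a1, m·a2−(n+1)} has ℂ-dimension at least c·m^{2n−1}. -/

import Mathlib

open MvPolynomial

/-- The space of bihomogeneous polynomials of bidegree `(a, b)` in the two groups of
variables `x_0, …, x_n` (indexed by `Sum.inl`) and `y_0, …, y_n` (indexed by `Sum.inr`). -/
noncomputable def Vab (n a b : ℕ) :
    Submodule ℂ (MvPolynomial (Fin (n + 1) ⊕ Fin (n + 1)) ℂ) :=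
  weightedHomogeneousSubmodule ℂ
    (Sum.elim (fun _ => ((1 : ℕ), (0 : ℕ))) (fun _ => ((0 : ℕ), (1 : ℕ)))) (a, b)

/-- The operator `D = ∑ i, x_i · ∂/∂y_i`. -/
noncomputable def Dop (n : ℕ) :
    Module.End ℂ (MvPolynomial (Fin (n + 1) ⊕ Fin (n + 1)) ℂ) :=
  ∑ i : Fin (n + 1),
    (LinearMap.mulLeft ℂ (X (Sum.inl i))).comp (pderiv (Sum.inr i)).toLinearMap

/-! The cokernel of any linear map `V → W` has dimension at least `dim W - dim V`, so it suffices
to count. With `f a = (a + 1) ⋯ (a + n)` one has `n! ^ 2 · dim V_{A,B} = f A · f B`. For `A ≤ B`,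
`f (a + 1) / f a = (a + 1 + n) / (a + 1)` decreases in `a`, so the product `f (A - j) · f (B + j)`
decreases in `j`, and already its first step drops it by about `n (B - A) (A B) ^ (n - 1)`.
For `A = m a1` and `B ≈ m a2` this is of order `m ^ (2n - 1)`. -/

open Finsupp
open scoped Nat

section Bihomogeneous

variable {σ τ : Type*} [Fintype σ] [Fintype τ]

theorem Finsupp.weight_sumElim_eq (d : σ ⊕ τ →₀ ℕ) :
    weight (Sum.elim (fun _ => ((1 : ℕ), (0 : ℕ))) (fun _ => ((0 : ℕ), (1 : ℕ)))) d
      = (∑ i, d (.inl i), ∑ j, d (.inr j)) := by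
  rw [weight_apply, Finsupp.sum_fintype _ _ (by simp), Fintype.sum_sum_type]
  ext <;> simp [Prod.fst_sum, Prod.snd_sum]

variable (σ τ) in
noncomputable def bidegreeEquivSym [DecidableEq σ] [DecidableEq τ] (a b : ℕ) :
    {d : σ ⊕ τ →₀ ℕ //
      weight (Sum.elim (fun _ => ((1 : ℕ), (0 : ℕ))) (fun _ => ((0 : ℕ), (1 : ℕ)))) d = (a, b)}
      ≃ Sym σ a × Sym τ b :=
  ((equivFunOnFinite.trans (Equiv.sumArrowEquivProdArrow σ τ ℕ)).subtypeEquiv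
      (p := fun d => weight _ d = (a, b))
      (q := fun f => (∑ i, f.1 i = a) ∧ ∑ j, f.2 j = b) (fun d => by
        simp [Finsupp.weight_sumElim_eq])).trans <|
    Equiv.subtypeProdEquivProd.trans <|
      (Sym.equivNatSumOfFintype σ a).symm.prodCongr (Sym.equivNatSumOfFintype τ b).symm

theorem finrank_weightedHomogeneousSubmodule_sumElim (K : Type*) [Field K] (a b : ℕ) :
    Module.finrank K (weightedHomogeneousSubmodule K
      (Sum.elim (fun _ => ((1 : ℕ), (0 : ℕ))) (fun _ => ((0 : ℕ), (1 : ℕ)))) (a, b) :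
        Submodule K (MvPolynomial (σ ⊕ τ) K))
      = (Fintype.card σ).multichoose a * (Fintype.card τ).multichoose b := by
  classical
  rw [weightedHomogeneousSubmodule_eq_finsupp_supported,
    (AddMonoidAlgebra.supportedEquivFinsupp _).finrank_eq,
    Module.finrank_eq_nat_card_basis (Finsupp.basisSingleOne)]
  refine (Nat.card_congr (bidegreeEquivSym σ τ a b)).trans ?_
  rw [Nat.card_prod,
    Sym.natCard_sym_eq_multichoose, Sym.natCard_sym_eq_multichoose,
    Nat.card_eq_fintype_card, Nat.card_eq_fintype_card]

end Bihomogeneous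

theorem finrank_Vab (n a b : ℕ) :
    Module.finrank ℂ (Vab n a b) = (a + n).choose n * (b + n).choose n := by
  rw [Vab, finrank_weightedHomogeneousSubmodule_sumElim, Fintype.card_fin,
    Nat.multichoose_eq, Nat.multichoose_eq, show n + 1 + a - 1 = a + n by omega,
    show n + 1 + b - 1 = b + n by omega, Nat.choose_symm_add, Nat.choose_symm_add]

instance (n a b : ℕ) : FiniteDimensional ℂ (Vab n a b) :=
  Module.finite_of_finrank_pos <| by
    rw [finrank_Vab]; exact Nat.mul_pos (Nat.choose_pos (by omega)) (Nat.choose_pos (by omega))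

theorem LinearMap.finrank_le_finrank_quotient_range_add {K V W : Type*} [DivisionRing K]
    [AddCommGroup V] [Module K V] [AddCommGroup W] [Module K W] [FiniteDimensional K V]
    [FiniteDimensional K W] (f : V →ₗ[K] W) :
    Module.finrank K W ≤ Module.finrank K (W ⧸ range f) + Module.finrank K V := by
  rw [← (range f).finrank_quotient_add_finrank]
  exact Nat.add_le_add_left f.finrank_range_le _

namespace Nat

theorem ascFactorial_mul_ascFactorial_add_le (n : ℕ) {a b : ℕ} (hab : a ≤ b) :
    (a + 1).ascFactorial n * (b + 2).ascFactorial n + n * (b - a) * ((a + 1) * (b + 1)) ^ (n - 1)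
      ≤ (a + 2).ascFactorial n * (b + 1).ascFactorial n := by
  obtain ⟨d, rfl⟩ := Nat.exists_eq_add_of_le hab
  rcases n with _ | n
  · simp
  set p := (a + 1).ascFactorial (n + 1)
  set q := (a + d + 1).ascFactorial (n + 1)
  have hp : (a + 1) * (a + 2).ascFactorial (n + 1) = (a + 1 + (n + 1)) * p :=
    succ_ascFactorial (a + 1) (n + 1)
  have hq : (a + d + 1) * (a + d + 2).ascFactorial (n + 1) = (a + d + 1 + (n + 1)) * q :=
    succ_ascFactorial (a + d + 1) (n + 1)
  have hpq : ((a + 1) * (a + d + 1)) ^ (n + 1) ≤ p * q := by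
    rw [mul_pow]
    exact Nat.mul_le_mul (pow_succ_le_ascFactorial _ _) (pow_succ_le_ascFactorial _ _)
  refine Nat.le_of_mul_le_mul_left (c := (a + 1) * (a + d + 1)) ?_
    (Nat.mul_pos (by omega) (by omega))
  calc (a + 1) * (a + d + 1) * (p * (a + d + 2).ascFactorial (n + 1)
          + (n + 1) * (a + d - a) * ((a + 1) * (a + d + 1)) ^ (n + 1 - 1))
      = (a + 1) * (a + d + 1 + (n + 1)) * (p * q)
          + (n + 1) * d * ((a + 1) * (a + d + 1)) ^ (n + 1) := by
        rw [Nat.add_sub_cancel_left, Nat.add_sub_cancel, pow_succ _ n]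
        linear_combination (a + 1) * p * hq
    _ ≤ (a + 1) * (a + d + 1 + (n + 1)) * (p * q) + (n + 1) * d * (p * q) := by gcongr
    _ = (a + 1) * (a + d + 1) * ((a + 2).ascFactorial (n + 1) * q) := by
        linear_combination (a + d + 1) * q * hp.symm

theorem ascFactorial_mul_ascFactorial_sub_add_le (n : ℕ) {a b j : ℕ} (hab : a ≤ b) (hj : j ≤ a) :
    (a - j + 1).ascFactorial n * (b + j + 1).ascFactorial n
      ≤ (a + 1).ascFactorial n * (b + 1).ascFactorial n := by
  induction j with
  | zero => rfl
  | succ j ih =>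
    have hstep := le_of_add_le_left
      (ascFactorial_mul_ascFactorial_add_le n (a := a - (j + 1)) (b := b + j) (by omega))
    rw [show a - (j + 1) + 2 = a - j + 1 by omega,
      show b + j + 2 = b + (j + 1) + 1 by omega] at hstep
    exact hstep.trans (ih (by omega))

theorem factorial_mul_factorial_mul_choose_mul_choose_add_le (n : ℕ) {k A B : ℕ} (hk : 1 ≤ k)
    (hkA : k ≤ A) (hAB : A ≤ B) :
    n ! * n ! * ((A - k + n).choose n * (B + k + n).choose n)
        + n * (B + 1 - A) * (A * (B + 1)) ^ (n - 1)
      ≤ n ! * n ! * ((A + n).choose n * (B + n).choose n) := by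
  have hasc (a : ℕ) : n ! * (a + n).choose n = (a + 1).ascFactorial n :=
    (ascFactorial_eq_factorial_mul_choose a n).symm
  have hfirst := ascFactorial_mul_ascFactorial_add_le n (a := A - 1) (b := B) (by omega)
  have hrest := ascFactorial_mul_ascFactorial_sub_add_le n (a := A - 1) (b := B + 1) (j := k - 1)
    (by omega) (by omega)
  rw [show A - 1 + 2 = A + 1 by omega, show B - (A - 1) = B + 1 - A by omega,
    show A - 1 + 1 = A by omega] at hfirst
  rw [show A - 1 - (k - 1) = A - k by omega, show B + 1 + (k - 1) = B + k by omega,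
    show A - 1 + 1 = A by omega, show B + 1 + 1 = B + 2 by omega] at hrest
  calc n ! * n ! * ((A - k + n).choose n * (B + k + n).choose n)
        + n * (B + 1 - A) * (A * (B + 1)) ^ (n - 1)
      = (A - k + 1).ascFactorial n * (B + k + 1).ascFactorial n
        + n * (B + 1 - A) * (A * (B + 1)) ^ (n - 1) := by
        rw [← hasc, ← hasc]; ring
    _ ≤ (A + 1).ascFactorial n * (B + 1).ascFactorial n := by
        have := add_le_add_left hrest (n * (B + 1 - A) * (A * (B + 1)) ^ (n - 1))
        omega
    _ = n ! * n ! * ((A + n).choose n * (B + n).choose n) := by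
        rw [← hasc, ← hasc]; ring

theorem pow_two_mul_sub_one_le {n m d A B : ℕ} (hn : 1 ≤ n) (hm : 2 * n ≤ m) (hd : m ≤ d + n)
    (hA : m ≤ A) (hB : m ≤ B) : m ^ (2 * n - 1) ≤ 2 * (n * d * (A * B) ^ (n - 1)) := by
  calc m ^ (2 * n - 1) = m * (m * m) ^ (n - 1) := by
        rw [← pow_two, ← pow_mul, ← pow_succ']; congr 1; omega
    _ ≤ (2 * d) * (A * B) ^ (n - 1) := by gcongr; omega
    _ ≤ n * (2 * d * (A * B) ^ (n - 1)) := Nat.le_mul_of_pos_left _ hn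
    _ = 2 * (n * d * (A * B) ^ (n - 1)) := by ring

end Nat

/-- For `a2 > a1 ≥ 1`, the cokernel of
`D^k : V_{m·a1−k, m·a2+k−(n+1)} → V_{m·a1, m·a2−(n+1)}` has dimension at least
`c·m^{2n−1}` for some `c > 0` and all sufficiently large `m`. -/
theorem cokernel_lower_bound_of_a2_gt_a1 (n k a1 a2 : ℕ)
    (hn : 1 ≤ n) (hk : 1 ≤ k) (ha1 : 1 ≤ a1) (h12 : a1 < a2) :
    ∃ c : ℝ, 0 < c ∧ ∃ M : ℕ, ∀ m : ℕ, M ≤ m → 0 < m →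
      ∀ g : (Vab n (m * a1 - k) (m * a2 + k - (n + 1))) →ₗ[ℂ]
            (Vab n (m * a1) (m * a2 - (n + 1))),
        (∀ v, (g v : MvPolynomial (Fin (n + 1) ⊕ Fin (n + 1)) ℂ)
            = ((Dop n) ^ k) (v : MvPolynomial (Fin (n + 1) ⊕ Fin (n + 1)) ℂ)) →
        c * (m : ℝ) ^ (2 * n - 1)
          ≤ (Module.finrank ℂ
              (↥(Vab n (m * a1) (m * a2 - (n + 1))) ⧸ LinearMap.range g) : ℝ) := by
  refine ⟨1 / (2 * (n ! * n ! : ℕ)), by positivity, 2 * n + k, fun m hm _ g _ => ?_⟩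
  have hma1 : m ≤ m * a1 := Nat.le_mul_of_pos_right m ha1
  have hma2 : m * a1 + m ≤ m * a2 := by simpa [mul_add] using Nat.mul_le_mul_left m h12
  have hdim := g.finrank_le_finrank_quotient_range_add
  rw [finrank_Vab, finrank_Vab] at hdim
  have hgain := Nat.factorial_mul_factorial_mul_choose_mul_choose_add_le n hk
    (A := m * a1) (B := m * a2 - (n + 1)) (by omega) (by omega)
  rw [show m * a2 - (n + 1) + k = m * a2 + k - (n + 1) by omega] at hgain
  have hpow := Nat.pow_two_mul_sub_one_le (d := m * a2 - (n + 1) + 1 - m * a1)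
    (B := m * a2 - (n + 1) + 1) hn (by omega) (by omega) hma1 (by omega)
  have hcoker : m ^ (2 * n - 1) ≤ 2 * (n ! * n !) * Module.finrank ℂ
      (↥(Vab n (m * a1) (m * a2 - (n + 1))) ⧸ LinearMap.range g) := by
    linarith [Nat.mul_le_mul_left (n ! * n !) hdim]
  rw [div_mul_eq_mul_div, div_le_iff₀ (by positivity), one_mul]
  exact_mod_cast hcoker.trans_eq (mul_comm _ _)
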